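/- arXiv:2208.02636 — 2 statements merged into one kernel-verified Lean document; each statement's English description precedes it below -/
import Mathlib

section
/- For each k ∈ ℕ, the subspace t^k ℂ[s,t,v] is a 𝔱𝔰𝔳-submodule of the module Φ(λ, a, b, q, {τ_i}, {γ_j}); i.e. the actions of all L_m, Y_m, M_m defined by (2.10)–(2.12) preserve t^k ℂ[s,t,v]. In particular, Φ(λ, a, b, q, {τ_i}, {γ_j}) is a reducible 𝔱𝔰𝔳-module. -/
open MvPolynomial

noncomputable section

/-- `ℂ[s,t,v]` with `s = X 0`, `t = X 1`, `v = X 2`. -/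
abbrev R3 : Type := MvPolynomial (Fin 3) ℂ

/-- The shift `f(s,t,v) ↦ f(s+m,t,v)`. -/
def shiftS (m : ℤ) : R3 →ₐ[ℂ] R3 :=
  aeval (fun i => if i = 0 then X 0 + C (m : ℂ) else X i)

/-- Embedding `ℂ[t] → ℂ[s,t,v]`, `t ↦ X 1`. -/
def tp (p : Polynomial ℂ) : R3 := Polynomial.aeval (X 1 : R3) p

/-- The action `M_m · f(s,t,v) = λ^m t f(s+m,t,v)` of formula (2.11). -/
def Mact (lam : ℂ) (m : ℤ) (f : R3) : R3 := lam ^ m • (X 1 * shiftS m f)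

/-- The action (2.12):
`Y_m · f = λ^m [(m Σ_{i=0}^q τ_i v^i + v + a m² t + (1-δ_{m,0}) b) f(s+m,t,v)
  + m t ∂f/∂v(s+m,t,v)]`, where `τ_i = t σ_i ∈ tℂ[t]`. -/
def Yact (lam a b : ℂ) (q : ℕ) (σ : ℕ → Polynomial ℂ) (m : ℤ) (f : R3) : R3 :=
  lam ^ m •
    (((m : ℂ) • (∑ i ∈ Finset.range (q + 1), tp (Polynomial.X * σ i) * X 2 ^ i) + X 2
        + C (a * (m : ℂ) ^ 2) * X 1 + C (if m = 0 then 0 else b)) * shiftS m f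
      + (m : ℂ) • (X 1 * pderiv 2 (shiftS m f)))

/-- The coefficient polynomial `D_m + γ_m/t` appearing in formula (2.10):
`(m/t)(Σ_{i=0}^q (-τ_i + 3τ_i/(i+1) - 3t τ_i'/(i+1)) v^{i+1} - (m/2) t Σ i τ_i v^{i-1}`
`- (m/2)(Σ τ_i v^i)² + 3amtv - (am²t+b) Σ τ_i v^i) + γ_m/t`,
written polynomially via `τ_i = t σ_i ∈ tℂ[t]` and `γ_j = t g_j ∈ tℂ[t]`. -/
def Dcoef (a b : ℂ) (q : ℕ) (σ : ℕ → Polynomial ℂ) (g : ℤ → Polynomial ℂ) (m : ℤ) : R3 :=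
  (m : ℂ) •
    ((∑ i ∈ Finset.range (q + 1),
        (C (-1 + 3 / ((i : ℂ) + 1)) * tp (σ i)
          - C (3 / ((i : ℂ) + 1)) * tp (Polynomial.derivative (Polynomial.X * σ i)))
        * X 2 ^ (i + 1))
      - ((m : ℂ) / 2) •
          (∑ i ∈ Finset.range (q + 1), ((i : ℂ)) • (tp (Polynomial.X * σ i) * X 2 ^ (i - 1)))
      - ((m : ℂ) / 2) •
          (X 1 * (∑ i ∈ Finset.range (q + 1), tp (σ i) * X 2 ^ i) ^ 2)
      + (3 * a * (m : ℂ)) • X 2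
      - (C (a * (m : ℂ) ^ 2) * X 1 + C b)
          * (∑ i ∈ Finset.range (q + 1), tp (σ i) * X 2 ^ i))
  + tp (g m)

/-- The action (2.10):
`L_m · f = λ^m [(s + D_m + γ_m/t) f(s+m,t,v) - 3mt ∂_t f(s+m,t,v)`
`- m(m Σ τ_i v^i + v + am²t + b) ∂_v f(s+m,t,v) - (m²/2) t ∂_v² f(s+m,t,v)]`. -/
def Lact (lam a b : ℂ) (q : ℕ) (σ : ℕ → Polynomial ℂ) (g : ℤ → Polynomial ℂ)
    (m : ℤ) (f : R3) : R3 :=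
  lam ^ m •
    ((X 0 + Dcoef a b q σ g m) * shiftS m f
      - (3 * (m : ℂ)) • (X 1 * pderiv 1 (shiftS m f))
      - (m : ℂ) •
          (((m : ℂ) • (∑ i ∈ Finset.range (q + 1), tp (Polynomial.X * σ i) * X 2 ^ i)
              + X 2 + C (a * (m : ℂ) ^ 2) * X 1 + C b) * pderiv 2 (shiftS m f))
      - ((m : ℂ) ^ 2 / 2) • (X 1 * pderiv 2 (pderiv 2 (shiftS m f))))

/-! The ideal `t^k ℂ[s,t,v]` is stable under the three building blocks of the actions: the
shift `s ↦ s + m` fixes `t`, `∂_v` treats `t` as a constant, and the Euler operator `t ∂_t`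
maps `t^k h` to `t^k (k h + t ∂_t h)`. Every action is a combination of these with polynomial
coefficients; this is where `τ_i, γ_j ∈ tℂ[t]` matters, since it makes `D_m + γ_m/t` a polynomial. -/

section pderiv

variable {R σ : Type*} [CommSemiring R] {k : ℕ} {p : MvPolynomial σ R}

theorem X_pow_dvd_pderiv_of_ne {i j : σ} (hij : i ≠ j) (h : X i ^ k ∣ p) :
    X i ^ k ∣ pderiv j p := by
  obtain ⟨r, rfl⟩ := h
  have hXk : pderiv j (X i ^ k : MvPolynomial σ R) = 0 := by
    rw [Derivation.leibniz_pow, pderiv_X_of_ne hij, smul_zero, smul_zero]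
  rw [pderiv_mul, hXk, zero_mul, zero_add]
  exact dvd_mul_right _ _

theorem X_pow_dvd_X_mul_pderiv_self (i : σ) (h : X i ^ k ∣ p) :
    X i ^ k ∣ X i * pderiv i p := by
  obtain ⟨r, rfl⟩ := h
  cases k with
  | zero => simp
  | succ n =>
    rw [pderiv_mul, Derivation.leibniz_pow, pderiv_X_self]
    refine ⟨(n + 1 : ℕ) • r + X i * pderiv i r, ?_⟩
    simp only [mul_add, nsmul_eq_mul, smul_eq_mul]
    push_cast
    ring

end pderiv

theorem shiftS_X_one (m : ℤ) : shiftS m (X 1) = X 1 := by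
  simp [shiftS]

theorem X_one_pow_dvd_shiftS {k : ℕ} (m : ℤ) {f : R3} (hf : (X 1 : R3) ^ k ∣ f) :
    (X 1 : R3) ^ k ∣ shiftS m f := by
  simpa only [map_pow, shiftS_X_one] using map_dvd (shiftS m) hf

section actions

variable {k : ℕ} {f : R3}

theorem X_one_pow_dvd_Mact (hf : (X 1 : R3) ^ k ∣ f) (m : ℤ) (lam : ℂ) :
    (X 1 : R3) ^ k ∣ Mact lam m f :=
  dvd_smul_of_dvd _ ((X_one_pow_dvd_shiftS m hf).mul_left _)

theorem X_one_pow_dvd_Yact (hf : (X 1 : R3) ^ k ∣ f) (m : ℤ) (lam a b : ℂ) (q : ℕ)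
    (σ : ℕ → Polynomial ℂ) :
    (X 1 : R3) ^ k ∣ Yact lam a b q σ m f := by
  have hs := X_one_pow_dvd_shiftS m hf
  refine dvd_smul_of_dvd _ (dvd_add (hs.mul_left _) (dvd_smul_of_dvd _ ?_))
  exact (X_pow_dvd_pderiv_of_ne (by decide) hs).mul_left _

theorem X_one_pow_dvd_Lact (hf : (X 1 : R3) ^ k ∣ f) (m : ℤ) (lam a b : ℂ) (q : ℕ)
    (σ : ℕ → Polynomial ℂ) (g : ℤ → Polynomial ℂ) :
    (X 1 : R3) ^ k ∣ Lact lam a b q σ g m f := by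
  have hs := X_one_pow_dvd_shiftS m hf
  have hv : (X 1 : R3) ^ k ∣ pderiv 2 (shiftS m f) := X_pow_dvd_pderiv_of_ne (by decide) hs
  refine dvd_smul_of_dvd _ (dvd_sub (dvd_sub (dvd_sub ?_ ?_) ?_) ?_)
  · exact hs.mul_left _
  · exact dvd_smul_of_dvd _ (X_pow_dvd_X_mul_pderiv_self 1 hs)
  · exact dvd_smul_of_dvd _ (hv.mul_left _)
  · exact dvd_smul_of_dvd _ ((X_pow_dvd_pderiv_of_ne (by decide) hv).mul_left _)

end actions

theorem stmt_8_general (lam : ℂ) (a b : ℂ) (q : ℕ)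
    (σ : ℕ → Polynomial ℂ) (g : ℤ → Polynomial ℂ) (k : ℕ) :
    ∀ (m : ℤ) (f : R3), (X 1 : R3) ^ k ∣ f →
      (X 1 : R3) ^ k ∣ Lact lam a b q σ g m f ∧
      (X 1 : R3) ^ k ∣ Yact lam a b q σ m f ∧
      (X 1 : R3) ^ k ∣ Mact lam m f :=
  fun m _ hf =>
    ⟨X_one_pow_dvd_Lact hf m lam a b q σ g, X_one_pow_dvd_Yact hf m lam a b q σ,
      X_one_pow_dvd_Mact hf m lam⟩

/-- For each `k ∈ ℕ`, the subspace `t^k ℂ[s,t,v]` is a 𝔱𝔰𝔳-submodule of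
`Φ(λ, a, b, q, {τ_i}, {γ_j})`: the actions (2.10)–(2.12) of all `L_m`, `Y_m`, `M_m`
preserve `t^k ℂ[s,t,v]` (here `τ_i = t σ_i`, `γ_j = t g_j`, `γ_0 = 0`).
In particular `Φ(λ, a, b, q, {τ_i}, {γ_j})` is reducible. -/
theorem stmt_8 (lam : ℂ) (hlam : lam ≠ 0) (a b : ℂ) (q : ℕ)
    (σ : ℕ → Polynomial ℂ) (g : ℤ → Polynomial ℂ) (hg0 : g 0 = 0) (k : ℕ) :
    ∀ (m : ℤ) (f : R3), (X 1 : R3) ^ k ∣ f →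
      (X 1 : R3) ^ k ∣ Lact lam a b q σ g m f ∧
      (X 1 : R3) ^ k ∣ Yact lam a b q σ m f ∧
      (X 1 : R3) ^ k ∣ Mact lam m f :=
  stmt_8_general lam a b q σ g k

end
end

section
/- Two modules Φ(λ, a, b, q, {τ_i}, {γ_j}) and Φ(λ', a', b', q', {τ'_i}, {γ'_j}) over 𝔱𝔰𝔳 are isomorphic if and only if (λ, a, b, q, {τ_i}, {γ_j}) = (λ', a', b', q', {τ'_i}, {γ'_j}) (where τ_q ≠ 0, τ'_{q'} ≠ 0 so that q is well defined). -/
/-!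
Because `γ_0 = 0`, the operators `L_0`, `M_0`, `Y_0` act as multiplication by `s`, `t`, `v`.
An isomorphism therefore commutes with multiplication by every polynomial, so it is
multiplication by a unit of `ℂ[s,t,v]`, i.e. by a nonzero constant, and the two actions agree
on `1`. Then `M_1 · 1 = λ t` gives `λ`; for `m ≠ 0`,
`Y_m · 1 = λ^m (m Σ τ_i v^i + v + a m² t + b)`, and comparing `m = 1, -1, 2` separates `a`, `b`
and `Σ τ_i v^i`, whose `v`-coefficients give `q` and the `τ_i`; finally
`L_m · 1 = λ^m (s + D_m + γ_m / t)`, where `D_m` only involves the data already matched,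
gives `γ_m`.
-/

open MvPolynomial

noncomputable section

namespace MvPolynomial

variable {R ι : Type*}

theorem map_mul_of_map_X_mul [CommSemiring R] (φ : MvPolynomial ι R →ₗ[R] MvPolynomial ι R)
    (h : ∀ i f, φ (X i * f) = X i * φ f) (p f : MvPolynomial ι R) : φ (p * f) = p * φ f := by
  induction p using MvPolynomial.induction_on generalizing f with
  | C r => rw [C_mul', map_smul, C_mul']
  | add p r hp hr => rw [add_mul, map_add, hp, hr, add_mul]
  | mul_X p i hp => rw [mul_assoc, hp, h, ← mul_assoc]

theorem exists_isUnit_smul_of_map_X_mul [CommRing R] [IsReduced R]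
    (φ : MvPolynomial ι R ≃ₗ[R] MvPolynomial ι R) (h : ∀ i f, φ (X i * f) = X i * φ f) :
    ∃ c : R, IsUnit c ∧ ∀ f, φ f = c • f := by
  have hmul (f : MvPolynomial ι R) : φ f = f * φ 1 := by
    simpa using map_mul_of_map_X_mul φ.toLinearMap h f 1
  obtain ⟨u, hu⟩ := φ.surjective 1
  have hunit : IsUnit (φ 1) := IsUnit.of_mul_eq_one u (by rw [mul_comm, ← hmul, hu])
  obtain ⟨c, hc, hc1⟩ := isUnit_iff_eq_C_of_isReduced.mp hunit
  exact ⟨c, hc, fun f => by rw [hmul, hc1, mul_comm, C_mul']⟩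

end MvPolynomial

/-- `s ↦ 0`, viewing `ℂ[t,v]` as `ℂ[t][v]`: reads off `v`-coefficients. -/
def evalSZero : R3 →ₐ[ℂ] Polynomial (Polynomial ℂ) :=
  aeval ![0, Polynomial.C Polynomial.X, Polynomial.X]

lemma evalSZero_tp (p : Polynomial ℂ) : evalSZero (tp p) = Polynomial.C p := by
  rw [tp, ← Polynomial.aeval_algHom_apply]
  simpa [evalSZero] using
    Polynomial.aeval_algHom_apply (Polynomial.CAlgHom (R := ℂ) (A := Polynomial ℂ)) Polynomial.X p

lemma tp_injective : Function.Injective tp := fun p p' h =>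
  Polynomial.C_injective (by rw [← evalSZero_tp, ← evalSZero_tp, h])

lemma coeff_evalSZero_sum_tp_mul_X_pow (Q : ℕ) (p : ℕ → Polynomial ℂ) (j : ℕ) :
    (evalSZero (∑ i ∈ Finset.range (Q + 1), tp (p i) * X 2 ^ i)).coeff j =
      if j ≤ Q then p j else 0 := by
  have hX : evalSZero (X 2) = Polynomial.X := by simp [evalSZero]
  simp [evalSZero_tp, hX, Polynomial.finsetSum_coeff]

lemma eq_of_sum_tp_mul_X_pow_eq {q q' : ℕ} {p p' : ℕ → Polynomial ℂ} (hq : p q ≠ 0)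
    (hq' : p' q' ≠ 0)
    (h : ∑ i ∈ Finset.range (q + 1), tp (p i) * X 2 ^ i
      = ∑ i ∈ Finset.range (q' + 1), tp (p' i) * X 2 ^ i) :
    q = q' ∧ ∀ i ≤ q, p i = p' i := by
  have hcoeff (j : ℕ) : (if j ≤ q then p j else 0) = if j ≤ q' then p' j else 0 := by
    rw [← coeff_evalSZero_sum_tp_mul_X_pow, h, coeff_evalSZero_sum_tp_mul_X_pow]
  obtain rfl : q = q' := by
    refine le_antisymm (not_lt.mp fun hlt => hq ?_) (not_lt.mp fun hlt => hq' ?_)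
    · simpa [hlt.not_ge] using hcoeff q
    · simpa [hlt.not_ge] using (hcoeff q').symm
  exact ⟨rfl, fun i hi => by simpa [hi] using hcoeff i⟩

/-- The polynomial `Σ_{i ≤ q} τ_i v^i`. -/
def tauPoly (q : ℕ) (σ : ℕ → Polynomial ℂ) : R3 :=
  ∑ i ∈ Finset.range (q + 1), tp (Polynomial.X * σ i) * X 2 ^ i

lemma eq_of_tauPoly_eq {q q' : ℕ} {σ σ' : ℕ → Polynomial ℂ} (hσq : σ q ≠ 0) (hσq' : σ' q' ≠ 0)
    (h : tauPoly q σ = tauPoly q' σ') : q = q' ∧ ∀ i ≤ q, σ i = σ' i := by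
  obtain ⟨rfl, hσ⟩ := eq_of_sum_tp_mul_X_pow_eq (mul_ne_zero Polynomial.X_ne_zero hσq)
    (mul_ne_zero Polynomial.X_ne_zero hσq') h
  exact ⟨rfl, fun i hi => mul_left_cancel₀ Polynomial.X_ne_zero (hσ i hi)⟩

lemma shiftS_zero : shiftS 0 = AlgHom.id ℂ R3 :=
  algHom_ext fun i => by fin_cases i <;> simp [shiftS]

section Actions

variable {lam a b : ℂ} {q : ℕ} {σ : ℕ → Polynomial ℂ} {g : ℤ → Polynomial ℂ}

lemma Mact_zero (f : R3) : Mact lam 0 f = X 1 * f := by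
  simp [Mact, shiftS_zero]

lemma Yact_zero (f : R3) : Yact lam a b q σ 0 f = X 2 * f := by
  simp [Yact, shiftS_zero]

lemma Lact_zero (hg0 : g 0 = 0) (f : R3) : Lact lam a b q σ g 0 f = X 0 * f := by
  simp [Lact, Dcoef, shiftS_zero, hg0, tp]

lemma Mact_smul (c : ℂ) (m : ℤ) (f : R3) : Mact lam m (c • f) = c • Mact lam m f := by
  simp only [Mact, map_smul, mul_smul_comm]
  module

lemma Yact_smul (c : ℂ) (m : ℤ) (f : R3) :
    Yact lam a b q σ m (c • f) = c • Yact lam a b q σ m f := by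
  simp only [Yact, map_smul, Derivation.map_smul, mul_smul_comm]
  module

lemma Lact_smul (c : ℂ) (m : ℤ) (f : R3) :
    Lact lam a b q σ g m (c • f) = c • Lact lam a b q σ g m f := by
  simp only [Lact, map_smul, Derivation.map_smul, mul_smul_comm]
  module

lemma Mact_one (m : ℤ) : Mact lam m 1 = lam ^ m • X 1 := by
  simp [Mact]

lemma Yact_one {m : ℤ} (hm : m ≠ 0) :
    Yact lam a b q σ m 1 =
      lam ^ m • (C (m : ℂ) * tauPoly q σ + X 2 + C (a * (m : ℂ) ^ 2) * X 1 + C b) := by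
  simp [Yact, tauPoly, hm, smul_eq_C_mul]

lemma Lact_one (m : ℤ) : Lact lam a b q σ g m 1 = lam ^ m • (X 0 + Dcoef a b q σ g m) := by
  simp [Lact]

variable {σ' : ℕ → Polynomial ℂ}

lemma Dcoef_congr (hσ : ∀ i ≤ q, σ i = σ' i) (m : ℤ) :
    Dcoef a b q σ g m = Dcoef a b q σ' g m := by
  have hσ' (i) (hi : i ∈ Finset.range (q + 1)) : σ i = σ' i :=
    hσ i (Finset.mem_range_succ_iff.mp hi)
  simp +contextual only [Dcoef, hσ']

lemma Lact_congr (hσ : ∀ i ≤ q, σ i = σ' i) (m : ℤ) (f : R3) :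
    Lact lam a b q σ g m f = Lact lam a b q σ' g m f := by
  have hσ' (i) (hi : i ∈ Finset.range (q + 1)) : σ i = σ' i :=
    hσ i (Finset.mem_range_succ_iff.mp hi)
  simp +contextual only [Lact, Dcoef_congr hσ, hσ']

lemma Yact_congr (hσ : ∀ i ≤ q, σ i = σ' i) (m : ℤ) (f : R3) :
    Yact lam a b q σ m f = Yact lam a b q σ' m f := by
  have hσ' (i) (hi : i ∈ Finset.range (q + 1)) : σ i = σ' i :=
    hσ i (Finset.mem_range_succ_iff.mp hi)
  simp +contextual only [Yact, hσ']

end Actions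

section Isomorphisms

variable {lam lam' a a' b b' : ℂ} {q q' : ℕ} {σ σ' : ℕ → Polynomial ℂ} {g g' : ℤ → Polynomial ℂ}

lemma action_one_eq_of_iso (hg0 : g 0 = 0) (hg0' : g' 0 = 0) (φ : R3 ≃ₗ[ℂ] R3)
    (hφ : ∀ (m : ℤ) (f : R3),
        φ (Lact lam a b q σ g m f) = Lact lam' a' b' q' σ' g' m (φ f) ∧
        φ (Yact lam a b q σ m f) = Yact lam' a' b' q' σ' m (φ f) ∧
        φ (Mact lam m f) = Mact lam' m (φ f)) (m : ℤ) :
    Lact lam a b q σ g m 1 = Lact lam' a' b' q' σ' g' m 1 ∧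
      Yact lam a b q σ m 1 = Yact lam' a' b' q' σ' m 1 ∧ Mact lam m 1 = Mact lam' m 1 := by
  have hX0 (f : R3) : φ (X 0 * f) = X 0 * φ f := by
    simpa only [Lact_zero hg0, Lact_zero hg0'] using (hφ 0 f).1
  have hX1 (f : R3) : φ (X 1 * f) = X 1 * φ f := by simpa only [Mact_zero] using (hφ 0 f).2.2
  have hX2 (f : R3) : φ (X 2 * f) = X 2 * φ f := by simpa only [Yact_zero] using (hφ 0 f).2.1
  obtain ⟨c, hc, hφc⟩ := exists_isUnit_smul_of_map_X_mul φ fun i => by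
    fin_cases i
    exacts [hX0, hX1, hX2]
  simpa only [hφc, Lact_smul, Yact_smul, Mact_smul, hc.smul_left_cancel] using hφ m 1

lemma eq_of_Mact_one_eq (h : Mact lam 1 1 = Mact lam' 1 1) : lam = lam' := by
  simp only [Mact_one, zpow_one] at h
  exact smul_left_injective ℂ (X_ne_zero 1) h

lemma eq_of_Yact_one_eq (hlam : lam ≠ 0)
    (h : ∀ m, Yact lam a b q σ m 1 = Yact lam a' b' q' σ' m 1) :
    a = a' ∧ b = b' ∧ tauPoly q σ = tauPoly q' σ' := by
  have e (m : ℤ) (hm : m ≠ 0) :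
      C (m : ℂ) * tauPoly q σ + X 2 + C (a * (m : ℂ) ^ 2) * X 1 + C b
        = C (m : ℂ) * tauPoly q' σ' + X 2 + C (a' * (m : ℂ) ^ 2) * X 1 + C b' := by
    have hm' := h m
    rw [Yact_one hm, Yact_one hm] at hm'
    exact smul_right_injective R3 (zpow_ne_zero m hlam) hm'
  have e1 := e 1 one_ne_zero
  have em1 := e (-1) (by norm_num)
  have e2 := e 2 two_ne_zero
  simp only [Int.cast_one, Int.cast_neg, Int.cast_ofNat, map_mul, map_pow, map_neg, map_one,
    map_ofNat] at e1 em1 e2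
  have ha : (C a - C a') * (6 * X 1 : R3) = 0 := by linear_combination 2 * e2 - 3 * e1 + em1
  obtain rfl : a = a' := by
    simpa [sub_eq_zero, X_ne_zero] using ha
  have hb : (C b - C b') * (2 : R3) = 0 := by linear_combination e1 + em1
  obtain rfl : b = b' := by
    simpa [sub_eq_zero] using hb
  exact ⟨rfl, rfl, by linear_combination e1⟩

lemma eq_of_Lact_one_eq (hlam : lam ≠ 0) (hσ : ∀ i ≤ q, σ i = σ' i) {m : ℤ}
    (h : Lact lam a b q σ g m 1 = Lact lam a b q σ' g' m 1) : g m = g' m := by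
  rw [Lact_one, Lact_one, Dcoef_congr hσ] at h
  have hD := add_left_cancel (smul_right_injective R3 (zpow_ne_zero m hlam) h)
  unfold Dcoef at hD
  exact tp_injective (add_left_cancel hD)

end Isomorphisms

theorem stmt_9_general (lam lam' : ℂ) (hlam : lam ≠ 0)
    (a a' b b' : ℂ) (q q' : ℕ)
    (σ σ' : ℕ → Polynomial ℂ) (g g' : ℤ → Polynomial ℂ)
    (hg0 : g 0 = 0) (hg0' : g' 0 = 0) (hσq : σ q ≠ 0) (hσq' : σ' q' ≠ 0) :
    (∃ φ : R3 ≃ₗ[ℂ] R3, ∀ (m : ℤ) (f : R3),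
        φ (Lact lam a b q σ g m f) = Lact lam' a' b' q' σ' g' m (φ f) ∧
        φ (Yact lam a b q σ m f) = Yact lam' a' b' q' σ' m (φ f) ∧
        φ (Mact lam m f) = Mact lam' m (φ f)) ↔
      (lam = lam' ∧ a = a' ∧ b = b' ∧ q = q' ∧
        (∀ i ≤ q, σ i = σ' i) ∧ (∀ j : ℤ, g j = g' j)) := by
  constructor
  · rintro ⟨φ, hφ⟩
    have hact := action_one_eq_of_iso hg0 hg0' φ hφ
    obtain rfl := eq_of_Mact_one_eq (hact 1).2.2
    obtain ⟨rfl, rfl, hτ⟩ := eq_of_Yact_one_eq hlam fun m => (hact m).2.1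
    obtain ⟨rfl, hσ⟩ := eq_of_tauPoly_eq hσq hσq' hτ
    exact ⟨rfl, rfl, rfl, rfl, hσ, fun j => eq_of_Lact_one_eq hlam hσ (hact j).1⟩
  · rintro ⟨rfl, rfl, rfl, rfl, hσ, hg⟩
    obtain rfl : g = g' := funext hg
    exact ⟨LinearEquiv.refl ℂ R3, fun m f =>
      ⟨Lact_congr hσ m f, Yact_congr hσ m f, rfl⟩⟩

/-- Two modules `Φ(λ, a, b, q, {τ_i}, {γ_j})` and `Φ(λ', a', b', q', {τ'_i}, {γ'_j})`
over 𝔱𝔰𝔳 (with `τ_q ≠ 0`, `τ'_{q'} ≠ 0` so that `q` is well defined; here `τ_i = t σ_i`,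
`γ_j = t g_j`, so `τ_q ≠ 0 ↔ σ q ≠ 0` and the equalities `τ_i = τ'_i`, `γ_j = γ'_j`
amount to `σ i = σ' i`, `g j = g' j`) are isomorphic — i.e. there is a ℂ-linear
bijection of `ℂ[s,t,v]` commuting with the actions of all `L_m`, `Y_m`, `M_m` —
if and only if `(λ, a, b, q, {τ_i}, {γ_j}) = (λ', a', b', q', {τ'_i}, {γ'_j})`. -/
theorem stmt_9 (lam lam' : ℂ) (hlam : lam ≠ 0) (hlam' : lam' ≠ 0)
    (a a' b b' : ℂ) (q q' : ℕ)
    (σ σ' : ℕ → Polynomial ℂ) (g g' : ℤ → Polynomial ℂ)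
    (hg0 : g 0 = 0) (hg0' : g' 0 = 0) (hσq : σ q ≠ 0) (hσq' : σ' q' ≠ 0) :
    (∃ φ : R3 ≃ₗ[ℂ] R3, ∀ (m : ℤ) (f : R3),
        φ (Lact lam a b q σ g m f) = Lact lam' a' b' q' σ' g' m (φ f) ∧
        φ (Yact lam a b q σ m f) = Yact lam' a' b' q' σ' m (φ f) ∧
        φ (Mact lam m f) = Mact lam' m (φ f)) ↔
      (lam = lam' ∧ a = a' ∧ b = b' ∧ q = q' ∧
        (∀ i ≤ q, σ i = σ' i) ∧ (∀ j : ℤ, g j = g' j)) :=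
  stmt_9_general lam lam' hlam a a' b b' q q' σ σ' g g' hg0 hg0' hσq hσq'

end
end
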